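/- Let d ≥ 1, N ≥ 1 and N_Q ≥ 1 be integers, s ∈ (0,1), and set S = 2·N_Q. Define Y(x) = Σ_{m=−N}^{N−1} e^{imx} for x ∈ ℝ. Then for every k ∈ ℤ^d, Σ_{κ ∈ {−N,…,N−1}^d} [ (2π)^{2s}·S^{−2s}·(SN)^{−d} · Σ_{j ∈ {−N·N_Q, …, N·N_Q − 1}^d} ‖j‖^{2s} · e^{2πi⟨j, κ⟩/(SN)} ] · e^{−iπ⟨κ, k⟩/N} = π^{2s}·(2N)^{−d}·N_Q^{−d} · Σ_{j ∈ {−N·N_Q, …, N·N_Q − 1}^d} ‖j/N_Q‖^{2s} · Π_{l=1}^d Y((π/N)·(j_l/N_Q − k_l)). -/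

import Mathlib

open MeasureTheory Filter Complex

/-- An integer vector `k ∈ ℤ^d` viewed as a point of Euclidean space `ℝ^d`. -/
noncomputable def intVec (d : ℕ) (k : Fin d → ℤ) : EuclideanSpace ℝ (Fin d) :=
  WithLp.toLp 2 (fun i => (k i : ℝ))

/-- The Dirichlet-type geometric sum `Y(x) = Σ_{m=−N}^{N−1} e^{imx}`. -/
noncomputable def dirichletY (N : ℕ) (x : ℝ) : ℂ :=
  ∑ m ∈ Finset.Icc (-(N : ℤ)) ((N : ℤ) - 1), Complex.exp (Complex.I * (m : ℂ) * (x : ℂ))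

/-!
Expand both exponentials coordinatewise: for fixed `j`, the phase of the `κ`-th term is
`Σ_l κ_l θ_l` with `θ_l = (π/N)(j_l/N_Q − k_l)`, so after exchanging the `j`- and `κ`-sums the
inner sum over the box `{−N,…,N−1}^d` factors as `Π_l Y(θ_l)`. The remaining constants match
because `‖j/N_Q‖^{2s} = N_Q^{−2s}‖j‖^{2s}` and `(2π)^{2s}(2N_Q)^{−2s} = π^{2s}N_Q^{−2s}`.
-/

theorem inner_intVec {d : ℕ} (j κ : Fin d → ℤ) :
    inner ℝ (intVec d j) (intVec d κ) = ∑ l, (j l : ℝ) * κ l := by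
  simp only [intVec, PiLp.inner_apply, RCLike.inner_apply, conj_trivial]
  exact Finset.sum_congr rfl fun _ _ => mul_comm _ _

theorem sum_piFinset_prod_exp_eq_prod_dirichletY (d N : ℕ) (θ : Fin d → ℝ) :
    ∑ κ ∈ Fintype.piFinset (fun _ : Fin d => Finset.Icc (-(N : ℤ)) ((N : ℤ) - 1)),
      ∏ l, Complex.exp (Complex.I * (κ l : ℂ) * (θ l : ℂ)) = ∏ l, dirichletY N (θ l) :=
  (Finset.prod_univ_sum _ fun l (m : ℤ) => Complex.exp (Complex.I * (m : ℂ) * (θ l : ℂ))).symm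

theorem exp_phase_mul_exp_phase_eq_prod {d : ℕ} (N NQ : ℕ) (j κ k : Fin d → ℤ) :
    Complex.exp (2 * Real.pi * Complex.I *
        (((inner ℝ (intVec d j) (intVec d κ) : ℝ) / (2 * NQ * N) : ℝ) : ℂ)) *
      Complex.exp (-Complex.I *
        ((Real.pi * (inner ℝ (intVec d κ) (intVec d k) : ℝ) / N : ℝ) : ℂ))
    = ∏ l, Complex.exp (Complex.I * (κ l : ℂ) *
        ((Real.pi / N * ((j l : ℝ) / NQ - (k l : ℝ)) : ℝ) : ℂ)) := by
  rw [← Complex.exp_add, ← Complex.exp_sum, inner_intVec, inner_intVec]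
  congr 1
  push_cast
  simp only [Finset.mul_sum, Finset.sum_div, ← Finset.sum_add_distrib]
  exact Finset.sum_congr rfl fun l _ => by ring

theorem norm_inv_smul_rpow {E : Type*} [NormedAddCommGroup E] [NormedSpace ℝ E] {c : ℝ}
    (hc : 0 < c) (v : E) (p : ℝ) : ‖c⁻¹ • v‖ ^ p = c ^ (-p) * ‖v‖ ^ p := by
  rw [norm_smul, Real.norm_eq_abs, abs_inv, abs_of_pos hc,
    Real.mul_rpow (inv_nonneg.2 hc.le) (norm_nonneg v), Real.inv_rpow hc.le, Real.rpow_neg hc.le]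

theorem two_mul_rpow_mul_two_mul_rpow_neg {a q : ℝ} (ha : 0 ≤ a) (hq : 0 < q) (p : ℝ) :
    (2 * a) ^ p * (2 * q) ^ (-p) = a ^ p * q ^ (-p) := by
  rw [Real.mul_rpow zero_le_two ha, Real.rpow_neg (by positivity),
    Real.mul_rpow zero_le_two hq.le, Real.rpow_neg hq.le,
    mul_inv, mul_mul_mul_comm, mul_inv_cancel₀ (by positivity), one_mul]

theorem kernel_weight_eq {NQ : ℕ} (hNQ : 0 < NQ) (N d : ℕ) (s : ℝ)
    (j : Fin d → ℤ) :
    (2 * Real.pi) ^ (2 * s) * (2 * (NQ : ℝ)) ^ (-(2 * s)) *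
        (2 * (NQ : ℝ) * N) ^ (-(d : ℝ)) * ‖intVec d j‖ ^ (2 * s)
      = Real.pi ^ (2 * s) * (2 * (N : ℝ)) ^ (-(d : ℝ)) * (NQ : ℝ) ^ (-(d : ℝ)) *
        ‖(NQ : ℝ)⁻¹ • intVec d j‖ ^ (2 * s) := by
  have hNQ' : (0 : ℝ) < NQ := Nat.cast_pos.2 hNQ
  rw [two_mul_rpow_mul_two_mul_rpow_neg Real.pi_pos.le hNQ', norm_inv_smul_rpow hNQ',
    show 2 * (NQ : ℝ) * N = 2 * N * NQ by ring,
    Real.mul_rpow (by positivity) hNQ'.le]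
  ring

theorem periodic_kernel_dft_eq_quadrature_general (d N NQ : ℕ)
    (hNQ : 1 ≤ NQ) (s : ℝ) (k : Fin d → ℤ) :
    (∑ κ ∈ Fintype.piFinset (fun _ : Fin d => Finset.Icc (-(N : ℤ)) ((N : ℤ) - 1)),
        ((((2 * Real.pi) ^ (2 * s) : ℝ) : ℂ) *
            (((2 * (NQ : ℝ)) ^ (-(2 * s)) : ℝ) : ℂ) *
            (((2 * (NQ : ℝ) * N) ^ (-(d : ℝ)) : ℝ) : ℂ) *
            ∑ j ∈ Fintype.piFinset
                (fun _ : Fin d => Finset.Icc (-((N : ℤ) * NQ)) ((N : ℤ) * NQ - 1)),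
              ((‖intVec d j‖ ^ (2 * s) : ℝ) : ℂ) *
                Complex.exp (2 * Real.pi * Complex.I *
                  (((inner ℝ (intVec d j) (intVec d κ) : ℝ) /
                      (2 * NQ * N) : ℝ) : ℂ))) *
          Complex.exp (-Complex.I *
            ((Real.pi * (inner ℝ (intVec d κ) (intVec d k) : ℝ) / N : ℝ) : ℂ)))
      = ((Real.pi ^ (2 * s) : ℝ) : ℂ) * (((2 * (N : ℝ)) ^ (-(d : ℝ)) : ℝ) : ℂ) *
          (((NQ : ℝ) ^ (-(d : ℝ)) : ℝ) : ℂ) *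
          ∑ j ∈ Fintype.piFinset
              (fun _ : Fin d => Finset.Icc (-((N : ℤ) * NQ)) ((N : ℤ) * NQ - 1)),
            ((‖(NQ : ℝ)⁻¹ • intVec d j‖ ^ (2 * s) : ℝ) : ℂ) *
              ∏ l : Fin d,
                dirichletY N (Real.pi / N * ((j l : ℝ) / NQ - (k l : ℝ))) := by
  simp only [Finset.mul_sum, Finset.sum_mul]
  rw [Finset.sum_comm]
  refine Finset.sum_congr rfl fun j _ => ?_
  have hweight := congrArg (fun x : ℝ => (x : ℂ)) (kernel_weight_eq hNQ N d s j)
  push_cast at hweight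
  rw [← sum_piFinset_prod_exp_eq_prod_dirichletY, Finset.mul_sum, Finset.mul_sum]
  refine Finset.sum_congr rfl fun κ _ => ?_
  rw [← exp_phase_mul_exp_phase_eq_prod N NQ]
  simp only [← mul_assoc] at hweight ⊢
  rw [hweight]

/-- With the uniform quadrature rule with `N_Q` points per unit length, the `(2N)^d`-point
discrete Fourier transform of the kernel of the discrete scaled periodic fractional
Laplacian with scale factor `S = 2N_Q` equals the quadrature evaluation of the discrete
Fourier transform of the sinc-fractional Laplacian kernel. -/
theorem periodic_kernel_dft_eq_quadrature (d N NQ : ℕ) (hd : 1 ≤ d) (hN : 1 ≤ N)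
    (hNQ : 1 ≤ NQ) (s : ℝ) (hs : s ∈ Set.Ioo (0 : ℝ) 1) (k : Fin d → ℤ) :
    (∑ κ ∈ Fintype.piFinset (fun _ : Fin d => Finset.Icc (-(N : ℤ)) ((N : ℤ) - 1)),
        ((((2 * Real.pi) ^ (2 * s) : ℝ) : ℂ) *
            (((2 * (NQ : ℝ)) ^ (-(2 * s)) : ℝ) : ℂ) *
            (((2 * (NQ : ℝ) * N) ^ (-(d : ℝ)) : ℝ) : ℂ) *
            ∑ j ∈ Fintype.piFinset
                (fun _ : Fin d => Finset.Icc (-((N : ℤ) * NQ)) ((N : ℤ) * NQ - 1)),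
              ((‖intVec d j‖ ^ (2 * s) : ℝ) : ℂ) *
                Complex.exp (2 * Real.pi * Complex.I *
                  (((inner ℝ (intVec d j) (intVec d κ) : ℝ) /
                      (2 * NQ * N) : ℝ) : ℂ))) *
          Complex.exp (-Complex.I *
            ((Real.pi * (inner ℝ (intVec d κ) (intVec d k) : ℝ) / N : ℝ) : ℂ)))
      = ((Real.pi ^ (2 * s) : ℝ) : ℂ) * (((2 * (N : ℝ)) ^ (-(d : ℝ)) : ℝ) : ℂ) *
          (((NQ : ℝ) ^ (-(d : ℝ)) : ℝ) : ℂ) *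
          ∑ j ∈ Fintype.piFinset
              (fun _ : Fin d => Finset.Icc (-((N : ℤ) * NQ)) ((N : ℤ) * NQ - 1)),
            ((‖(NQ : ℝ)⁻¹ • intVec d j‖ ^ (2 * s) : ℝ) : ℂ) *
              ∏ l : Fin d,
                dirichletY N (Real.pi / N * ((j l : ℝ) / NQ - (k l : ℝ))) :=
  periodic_kernel_dft_eq_quadrature_general d N NQ hNQ s k
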